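/- arXiv:math/9606217 — 2 statements merged into one kernel-verified Lean document; each statement's English description precedes it below -/
import Mathlib

section
/- Let ω be a primitive 6-th root of unity, h_p(z) = ω²z, h_q(z) = ωz + (ω - 1) affine maps of ℂ, and set A = {h_p, h_p²} (nonidentity elements of ⟨h_p⟩) and B = {h_q, h_q², h_q³, h_q⁴, h_q⁵}. Then the only solutions of h_q^a ∘ h_p^b = h_p^c ∘ h_q^d with h_q^a, h_q^d ∈ B and h_p^b, h_p^c ∈ A are (a,b,c,d) ≡ (1,1,2,5) and (5,2,1,1) (exponents mod 6 and mod 3 respectively). -/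
/-- The group of affine transformations `z ↦ a z + b` of `ℂ` (with `a ≠ 0`),
under composition. -/
@[ext]
structure Aff where
  a : ℂˣ
  b : ℂ

namespace Aff

instance : Mul Aff := ⟨fun x y => ⟨x.a * y.a, (x.a : ℂ) * y.b + x.b⟩⟩
instance : One Aff := ⟨⟨1, 0⟩⟩
instance : Inv Aff := ⟨fun x => ⟨x.a⁻¹, -(((x.a⁻¹ : ℂˣ) : ℂ) * x.b)⟩⟩

@[simp] lemma mul_a (x y : Aff) : (x * y).a = x.a * y.a := rfl
@[simp] lemma mul_b (x y : Aff) : (x * y).b = (x.a : ℂ) * y.b + x.b := rfl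
@[simp] lemma one_a : (1 : Aff).a = 1 := rfl
@[simp] lemma one_b : (1 : Aff).b = 0 := rfl
@[simp] lemma inv_a (x : Aff) : x⁻¹.a = x.a⁻¹ := rfl
@[simp] lemma inv_b (x : Aff) : x⁻¹.b = -(((x.a⁻¹ : ℂˣ) : ℂ) * x.b) := rfl

instance : Group Aff where
  mul_assoc x y z := by
    ext
    · simp [mul_assoc]
    · simp; ring
  one_mul x := by ext <;> simp
  mul_one x := by ext <;> simp
  inv_mul_cancel x := by
    ext
    · simp
    · have h : ((x.a : ℂ)) ≠ 0 := x.a.ne_zero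
      simp only [mul_b, inv_b, inv_a, one_b]; ring

/-- `Aff.apply g z = a z + b`: the action of an affine map on `ℂ`. -/
def apply (g : Aff) (z : ℂ) : ℂ := (g.a : ℂ) * z + g.b

end Aff

/-! `hq` is the rotation by `ω` about `-1` and `hp` the rotation by `ω²` about `0`. Comparing
linear parts, `hq ^ a * hp ^ b = hp ^ c * hq ^ d` says `a + 2b ≡ 2c + d (mod 6)`; given this,
comparing translation parts says `ω ^ a (1 - ω ^ 2b) = 1 - ω ^ 2c`. As `ω² - ω + 1 = 0`, one has
`1 - ω ^ 2k = ω ^ (k % 3) (1 - 2ω)` for `k ≢ 0 (mod 3)`, so the second condition becomes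
`a + b % 3 ≡ c % 3 (mod 6)`, and the two congruences have exactly the two stated solutions. -/

namespace Aff

def rotation (u : ℂˣ) (z₀ : ℂ) : Aff := ⟨u, (1 - u) * z₀⟩

lemma rotation_pow (u : ℂˣ) (z₀ : ℂ) (k : ℕ) : rotation u z₀ ^ k = rotation (u ^ k) z₀ := by
  induction k with
  | zero => ext <;> simp [rotation]
  | succ k ih =>
    rw [pow_succ, ih]
    ext
    · simp [rotation, pow_succ]
    · simp [rotation, pow_succ]; ring

end Aff

namespace IsPrimitiveRoot

lemma pow_eq_pow_iff_modEq {M : Type*} [CommMonoid M] {ζ : M} {k m n : ℕ}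
    (h : IsPrimitiveRoot ζ k) (hk : k ≠ 0) : ζ ^ m = ζ ^ n ↔ m ≡ n [MOD k] := by
  rw [(h.isOfFinOrder hk).pow_eq_pow_iff_modEq, ← h.eq_orderOf]

variable {R : Type*} [CommRing R] [IsDomain R] {ω : R}

lemma sq_sub_self_add_one (hω : IsPrimitiveRoot ω 6) : ω ^ 2 - ω + 1 = 0 := by
  simpa [Polynomial.cyclotomic_six] using hω.isRoot_cyclotomic (by norm_num)

lemma one_sub_two_mul_ne_zero (hω : IsPrimitiveRoot ω 6) : 1 - 2 * ω ≠ 0 := by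
  intro h
  apply hω.pow_ne_one_of_pos_of_lt two_ne_zero (by norm_num)
  -- `(1 - 2ω)² = -3` modulo `ω² - ω + 1`, so `3 = 0` and then `ω + 1 = 1 - 2ω + 3ω = 0`.
  linear_combination (ω - 1) * ((1 - ω * (1 - 2 * ω)) * h + 4 * ω * hω.sq_sub_self_add_one)

lemma one_sub_pow_two_mul (hω : IsPrimitiveRoot ω 6) {k : ℕ} (hk : k % 3 ≠ 0) :
    1 - ω ^ (2 * k) = ω ^ (k % 3) * (1 - 2 * ω) := by
  have hcyc := hω.sq_sub_self_add_one
  rw [(hω.pow_eq_pow_iff_modEq (by norm_num)).2 (show 2 * k ≡ 2 * (k % 3) [MOD 6] by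
    unfold Nat.ModEq; omega)]
  rcases (by omega : k % 3 = 1 ∨ k % 3 = 2) with h | h <;> rw [h]
  · linear_combination hcyc
  · linear_combination (1 + ω - ω ^ 2) * hcyc

lemma pow_relations_iff_modEq (hω : IsPrimitiveRoot ω 6) {a b c d : ℕ} (hb : b % 3 ≠ 0)
    (hc : c % 3 ≠ 0) :
    (ω ^ a * ω ^ (2 * b) = ω ^ (2 * c) * ω ^ d ∧ ω ^ a - 1 = ω ^ (2 * c) * (ω ^ d - 1)) ↔
      a + 2 * b ≡ 2 * c + d [MOD 6] ∧ a + b % 3 ≡ c % 3 [MOD 6] := by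
  have translation_iff (h1 : ω ^ a * ω ^ (2 * b) = ω ^ (2 * c) * ω ^ d) :
      ω ^ a - 1 = ω ^ (2 * c) * (ω ^ d - 1) ↔ ω ^ (a + b % 3) = ω ^ (c % 3) :=
    calc ω ^ a - 1 = ω ^ (2 * c) * (ω ^ d - 1) ↔ ω ^ a * (1 - ω ^ (2 * b)) = 1 - ω ^ (2 * c) :=
          ⟨fun h => by linear_combination h - h1, fun h => by linear_combination h + h1⟩
      _ ↔ ω ^ (a + b % 3) * (1 - 2 * ω) = ω ^ (c % 3) * (1 - 2 * ω) := by
          rw [hω.one_sub_pow_two_mul hb, hω.one_sub_pow_two_mul hc, pow_add, mul_assoc]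
      _ ↔ _ := mul_left_inj' hω.one_sub_two_mul_ne_zero
  rw [and_congr_right translation_iff, ← pow_add, ← pow_add,
    hω.pow_eq_pow_iff_modEq (by norm_num), hω.pow_eq_pow_iff_modEq (by norm_num)]

end IsPrimitiveRoot

theorem stmt_17_general (ω : ℂˣ) (hω : IsPrimitiveRoot ω 6)
    (hp hq : Aff) (hhp : hp = ⟨ω ^ 2, 0⟩) (hhq : hq = ⟨ω, (ω : ℂ) - 1⟩)
    (a b c d : ℕ)
    (ha : a % 6 ≠ 0) (hb : b % 3 ≠ 0) (hc : c % 3 ≠ 0) :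
    hq ^ a * hp ^ b = hp ^ c * hq ^ d ↔
      (a % 6 = 1 ∧ b % 3 = 1 ∧ c % 3 = 2 ∧ d % 6 = 5) ∨
      (a % 6 = 5 ∧ b % 3 = 2 ∧ c % 3 = 1 ∧ d % 6 = 1) := by
  have hp_rotation : hp = Aff.rotation (ω ^ 2) 0 := by rw [hhp, Aff.rotation, mul_zero]
  have hq_rotation : hq = Aff.rotation ω (-1) := by rw [hhq, Aff.rotation]; congr 1; ring
  simp_rw [hp_rotation, hq_rotation, Aff.rotation_pow]
  simp only [Aff.ext_iff, Aff.rotation, Aff.mul_a, Aff.mul_b, Units.ext_iff,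
    Units.val_mul, Units.val_pow_eq_pow_val, ← pow_mul, mul_zero, add_zero, zero_add, mul_neg, mul_one,
    neg_sub]
  rw [(IsPrimitiveRoot.coe_units_iff.2 hω).pow_relations_iff_modEq hb hc]
  unfold Nat.ModEq
  omega

theorem stmt_17 (ω : ℂˣ) (hω : IsPrimitiveRoot ω 6)
    (hp hq : Aff) (hhp : hp = ⟨ω ^ 2, 0⟩) (hhq : hq = ⟨ω, (ω : ℂ) - 1⟩)
    (a b c d : ℕ)
    (ha : a % 6 ≠ 0) (hb : b % 3 ≠ 0) (hc : c % 3 ≠ 0) (hd : d % 6 ≠ 0) :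
    hq ^ a * hp ^ b = hp ^ c * hq ^ d ↔
      (a % 6 = 1 ∧ b % 3 = 1 ∧ c % 3 = 2 ∧ d % 6 = 5) ∨
      (a % 6 = 5 ∧ b % 3 = 2 ∧ c % 3 = 1 ∧ d % 6 = 1) :=
  stmt_17_general ω hω hp hq hhp hhq a b c d ha hb hc
end

section
/- Let n be odd, ε a primitive n-th root of unity, h_p(z) = εz, h_q(z) = εz + (ε - 1). For all integers l₁, l₂, l₃ with l_i ≢ 0 (mod n) and l₁ + l₂ + l₃ ≡ 0 (mod n), the relation h_p^{l₁} ∘ h_q^{l₂} ∘ h_p^{l₃} = h_q^{-l₃} ∘ h_p^{-l₂} ∘ h_q^{-l₁} holds as affine maps of ℂ. -/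
/-! Both generators are rotations of the plane about a point: `h_p` about `0`, `h_q` about `-1`.
If `a b c = 1`, the relation `P a * Q b * P c = Q c⁻¹ * P b⁻¹ * Q a⁻¹` holds for the dilations
`P`, `Q` about any two centres; for `h_p`, `h_q` take `a, b, c = ε ^ l₁, ε ^ l₂, ε ^ l₃`. -/

namespace Aff

/-- `dilation c u` is `z ↦ u (z - c) + c`. -/
def dilation (c : ℂ) : ℂˣ →* Aff where
  toFun u := ⟨u, c * (1 - u)⟩
  map_one' := by ext <;> simp
  map_mul' u v := by
    ext
    · simp
    · simp; ring

theorem dilation_mul_dilation_mul_dilation (x y : ℂ) {a b c : ℂˣ} (h : a * b * c = 1) :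
    dilation x a * dilation y b * dilation x c =
      dilation y c⁻¹ * dilation x b⁻¹ * dilation y a⁻¹ := by
  obtain rfl : c = (a * b)⁻¹ := eq_inv_of_mul_eq_one_right h
  have ha : (a : ℂ) ≠ 0 := a.ne_zero
  have hb : (b : ℂ) ≠ 0 := b.ne_zero
  ext
  · simp only [mul_a, dilation, MonoidHom.coe_mk, OneHom.coe_mk]
    group
  · simp only [mul_b, mul_a, dilation, MonoidHom.coe_mk, OneHom.coe_mk, Units.val_mul,
      Units.val_inv_eq_inv_val]
    field_simp
    ring

end Aff

theorem stmt_18_general (n : ℕ) (ε : ℂˣ)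
    (hε : IsPrimitiveRoot ε n)
    (hp hq : Aff) (hhp : hp = ⟨ε, 0⟩) (hhq : hq = ⟨ε, (ε : ℂ) - 1⟩)
    (l₁ l₂ l₃ : ℤ)
    (hsum : (n : ℤ) ∣ l₁ + l₂ + l₃) :
    hp ^ l₁ * hq ^ l₂ * hp ^ l₃ = hq ^ (-l₃) * hp ^ (-l₂) * hq ^ (-l₁) := by
  have hp_eq : hp = Aff.dilation 0 ε := by
    subst hhp; ext <;> simp [Aff.dilation]
  have hq_eq : hq = Aff.dilation (-1) ε := by
    subst hhq; ext <;> simp [Aff.dilation]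
  have hprod : ε ^ l₁ * ε ^ l₂ * ε ^ l₃ = 1 := by
    rw [← zpow_add, ← zpow_add]
    exact (hε.zpow_eq_one_iff_dvd _).2 hsum
  simp only [hp_eq, hq_eq, zpow_neg, ← map_zpow, ← map_inv]
  exact Aff.dilation_mul_dilation_mul_dilation _ _ hprod

theorem stmt_18 (n : ℕ) (hpos : 0 < n) (hodd : Odd n) (ε : ℂˣ)
    (hε : IsPrimitiveRoot ε n)
    (hp hq : Aff) (hhp : hp = ⟨ε, 0⟩) (hhq : hq = ⟨ε, (ε : ℂ) - 1⟩)
    (l₁ l₂ l₃ : ℤ)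
    (hl₁ : ¬ (n : ℤ) ∣ l₁) (hl₂ : ¬ (n : ℤ) ∣ l₂) (hl₃ : ¬ (n : ℤ) ∣ l₃)
    (hsum : (n : ℤ) ∣ l₁ + l₂ + l₃) :
    hp ^ l₁ * hq ^ l₂ * hp ^ l₃ = hq ^ (-l₃) * hp ^ (-l₂) * hq ^ (-l₁) :=
  stmt_18_general n ε hε hp hq hhp hhq l₁ l₂ l₃ hsum
end
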